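/- For every bounded linear operator A on H and every t ∈ [0,1], one has (1/2)·‖A‖_ber ≤ max{t, 1−t}·‖A‖_ber ≤ ‖A‖_{t-ber} ≤ ‖A‖_ber. -/
import Mathlib


open ContinuousLinearMap
open scoped InnerProductSpace

/-- The `t`-Berezin norm of `A` with respect to the family `k` of (normalized reproducing
kernel) vectors. -/
noncomputable def tber {E : Type*} [NormedAddCommGroup E] [InnerProductSpace ℂ E]
    [CompleteSpace E] {ι : Type*} (k : ι → E) (t : ℝ) (A : E →L[ℂ] E) : ℝ :=
  ⨆ p : ι × ι, (t * ‖⟪A (k p.1), k p.2⟫_ℂ‖ + (1 - t) * ‖⟪adjoint A (k p.1), k p.2⟫_ℂ‖)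

/-- The Berezin norm of `A` with respect to the family `k`. -/
noncomputable def berNorm {E : Type*} [NormedAddCommGroup E] [InnerProductSpace ℂ E]
    {ι : Type*} (k : ι → E) (A : E →L[ℂ] E) : ℝ :=
  ⨆ p : ι × ι, ‖⟪A (k p.1), k p.2⟫_ℂ‖

/-- The Berezin number of `A` with respect to the family `k`. -/
noncomputable def berNum {E : Type*} [NormedAddCommGroup E] [InnerProductSpace ℂ E]
    {ι : Type*} (k : ι → E) (A : E →L[ℂ] E) : ℝ :=
  ⨆ l : ι, ‖⟪A (k l), k l⟫_ℂ‖

/-- The modulus `|A| = (A*A)^(1/2)` of an operator, via the continuous functional calculus. -/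
noncomputable def absOp {H : Type*} [NormedAddCommGroup H] [InnerProductSpace ℂ H]
    [CompleteSpace H] (A : H →L[ℂ] H) : H →L[ℂ] H :=
  cfc Real.sqrt (adjoint A * A)

/-- Real powers of a (positive) operator via the continuous functional calculus. -/
noncomputable def rpowOp {H : Type*} [NormedAddCommGroup H] [InnerProductSpace ℂ H]
    [CompleteSpace H] (A : H →L[ℂ] H) (r : ℝ) : H →L[ℂ] H :=
  cfc (fun x : ℝ => x ^ r) A

theorem stmt1 {H : Type*} [NormedAddCommGroup H] [InnerProductSpace ℂ H] [CompleteSpace H]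
    {Ω : Type*} [Nonempty Ω] (k : Ω → H) (hk : ∀ l, ‖k l‖ = 1)
    (t : ℝ) (ht : t ∈ Set.Icc (0 : ℝ) 1) (A : H →L[ℂ] H) :
    (1 / 2) * berNorm k A ≤ max t (1 - t) * berNorm k A ∧
    max t (1 - t) * berNorm k A ≤ tber k t A ∧
    tber k t A ≤ berNorm k A := by
  obtain ⟨ht0, ht1⟩ := ht
  set f : Ω × Ω → ℝ := fun p => ‖⟪A (k p.1), k p.2⟫_ℂ‖ with hf
  have hfnn : ∀ p, 0 ≤ f p := fun p => norm_nonneg _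
  have hfb : ∀ p, f p ≤ ‖A‖ := by
    intro p
    calc f p ≤ ‖A (k p.1)‖ * ‖k p.2‖ := norm_inner_le_norm _ _
      _ ≤ ‖A‖ * ‖k p.1‖ * ‖k p.2‖ := by
          gcongr; exact A.le_opNorm _
      _ = ‖A‖ := by rw [hk, hk]; ring
  have hfbdd : BddAbove (Set.range f) := ⟨‖A‖, by rintro x ⟨p, rfl⟩; exact hfb p⟩
  have hgf : ∀ p : Ω × Ω, ‖⟪adjoint A (k p.1), k p.2⟫_ℂ‖ = f p.swap := by
    intro p
    rw [ContinuousLinearMap.adjoint_inner_left]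
    exact norm_inner_symm _ _
  have hB0 : 0 ≤ berNorm k A :=
    le_ciSup_of_le hfbdd (Classical.arbitrary Ω, Classical.arbitrary Ω)
      (hfnn _)
  have hfB : ∀ p, f p ≤ berNorm k A := fun p => le_ciSup hfbdd p
  have htbdd : BddAbove (Set.range fun p : Ω × Ω =>
      t * ‖⟪A (k p.1), k p.2⟫_ℂ‖ + (1 - t) * ‖⟪adjoint A (k p.1), k p.2⟫_ℂ‖) := by
    refine ⟨‖A‖, ?_⟩
    rintro x ⟨p, rfl⟩
    show t * f p + (1 - t) * ‖⟪adjoint A (k p.1), k p.2⟫_ℂ‖ ≤ ‖A‖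
    rw [hgf]
    calc t * f p + (1 - t) * f p.swap ≤ t * ‖A‖ + (1 - t) * ‖A‖ := by
          gcongr <;> first | exact hfb _ | linarith
      _ = ‖A‖ := by ring
  have hle_tber : ∀ p : Ω × Ω,
      t * f p + (1 - t) * f p.swap ≤ tber k t A := by
    intro p
    have := le_ciSup htbdd p
    rwa [hgf] at this
  have hmaxpos : (1 / 2 : ℝ) ≤ max t (1 - t) := by
    rcases le_total t (1 - t) with h | h
    · have := le_max_right t (1 - t); linarith [max_le_iff.mp (le_refl (max t (1-t)))]
    · have := le_max_left t (1 - t); linarith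
  refine ⟨by nlinarith, ?_, ?_⟩
  · -- max t (1-t) * berNorm ≤ tber
    have hmax0 : (0 : ℝ) < max t (1 - t) := by linarith
    have key : ∀ p, max t (1 - t) * f p ≤ tber k t A := by
      intro p
      rcases max_cases t (1 - t) with ⟨hm, hle⟩ | ⟨hm, hle⟩
      · rw [hm]
        have h1 : t * f p ≤ t * f p + (1 - t) * f p.swap := by
          nlinarith [hfnn p.swap]
        exact h1.trans (hle_tber p)
      · rw [hm]
        have h1 : (1 - t) * f p ≤ t * f p.swap + (1 - t) * f p := by
          nlinarith [hfnn p.swap]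
        have := hle_tber p.swap
        simpa using h1.trans this
    have : berNorm k A ≤ tber k t A / max t (1 - t) := by
      refine ciSup_le fun p => ?_
      rw [le_div_iff₀ hmax0]
      linarith [key p, mul_comm (f p) (max t (1 - t))]
    calc max t (1 - t) * berNorm k A ≤ max t (1 - t) * (tber k t A / max t (1 - t)) := by
          gcongr
      _ = tber k t A := by field_simp
  · -- tber ≤ berNorm
    refine ciSup_le fun p => ?_
    rw [hgf]
    calc t * f p + (1 - t) * f p.swap ≤ t * berNorm k A + (1 - t) * berNorm k A := by
          gcongr <;> first | exact hfB _ | linarith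
      _ = berNorm k A := by ring
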